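/- Let a, b be real numbers and, for real t > 0, let f(t) = t^{2+iπ/2} + (1 + (π/4)i)·( t^{1+iπ/2} + (a + b(π/4)i)·t^{iπ/2} ). Then there exist t₀ > 0 and a continuous function θ : [t₀, ∞) → ℝ with f(t) = |f(t)|·e^{iθ(t)} for all t ≥ t₀, such that θ(t) = (π/2)·log t + π/(4t) + π(a + b − 1)/(4t²) + O(1/t³) as t → ∞. -/

import Mathlib

open Real

/-!
Since `t^{iπ/2} = e^{i(π/2) log t}`, `f` factors as `e^{i(π/2) log t} · g(t)` with
`g(t) = (t² + t + c) + i(π/4)(t + s)`, `c = a − bπ²/16`, `s = a + b`. For large `t` the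
real part of `g` exceeds `t²`, so `θ(t) = (π/2) log t + arctan (Im g / Re g)` is a continuous
argument of `f`.
Finally `Im g / Re g = π/(4t) + π(s − 1)/(4t²) + O(1/t³)` is of size `O(1/t)`, and
`|arctan x − x| ≤ x³` for `x ≥ 0`.
-/

/-- `f(t) = t^{2+iπ/2} + (1 + (π/4)i)·(t^{1+iπ/2} + (a + b(π/4)i)·t^{iπ/2})`. -/
noncomputable def f (a b t : ℝ) : ℂ :=
  (t : ℂ) ^ (2 + Complex.I * (π : ℂ)/2)
    + (1 + (π : ℂ)/4 * Complex.I) *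
        ((t : ℂ) ^ (1 + Complex.I * (π : ℂ)/2)
          + ((a : ℂ) + (b : ℂ) * (π : ℂ)/4 * Complex.I) * (t : ℂ) ^ (Complex.I * (π : ℂ)/2))

namespace Real

lemma arctan_le_self {x : ℝ} (hx : 0 ≤ x) : arctan x ≤ x := by
  simpa [tan_arctan] using le_tan (arctan_nonneg.2 hx) (arctan_lt_pi_div_two x)

lemma sub_pow_three_le_arctan {x : ℝ} (hx : 0 ≤ x) : x - x ^ 3 ≤ arctan x := by
  have hmono : Monotone fun y : ℝ => arctan y - y + y ^ 3 := by
    refine monotone_of_deriv_nonneg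
      ((differentiable_arctan.sub differentiable_id).add (differentiable_pow 3)) fun y => ?_
    have hderiv : HasDerivAt (fun y : ℝ => arctan y - y + y ^ 3)
        (1 / (1 + y ^ 2) - 1 + 3 * y ^ 2) y := by
      refine (((hasDerivAt_arctan y).sub (hasDerivAt_id' y)).add
        (hasDerivAt_pow 3 y)).congr_deriv ?_
      norm_num
    rw [hderiv.deriv]
    have h : 1 - y ^ 2 ≤ 1 / (1 + y ^ 2) := by
      rw [le_div_iff₀ (by positivity)]; nlinarith [sq_nonneg (y ^ 2)]
    nlinarith [sq_nonneg y]
  have h := hmono hx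
  simp only [arctan_zero] at h
  linarith

lemma abs_arctan_sub_self_le {x : ℝ} (hx : 0 ≤ x) : |arctan x - x| ≤ x ^ 3 :=
  abs_sub_le_iff.2 ⟨by linarith [arctan_le_self hx, pow_nonneg hx 3],
    by linarith [sub_pow_three_le_arctan hx]⟩

end Real

namespace Complex

lemma arg_eq_arctan_of_re_pos {z : ℂ} (hz : 0 < z.re) : arg z = Real.arctan (z.im / z.re) := by
  obtain ⟨h₁, h₂⟩ := abs_lt.1 (abs_arg_lt_pi_div_two_iff.2 (Or.inl hz))
  rw [← tan_arg, Real.arctan_tan h₁ h₂]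

lemma eq_norm_mul_exp_of_eq_exp_mul {z w : ℂ} {φ : ℝ} (h : z = exp (I * φ) * w) :
    z = ‖z‖ * exp (I * ↑(φ + arg w)) := by
  have hnorm : ‖z‖ = ‖w‖ := by
    rw [h, norm_mul, mul_comm I, norm_exp_ofReal_mul_I, one_mul]
  conv_lhs => rw [h, ← norm_mul_exp_arg_mul_I w]
  rw [hnorm, ofReal_add, mul_add, exp_add, mul_comm I (arg w : ℂ)]
  ring

end Complex

noncomputable def g (c s t : ℝ) : ℂ := ⟨t ^ 2 + t + c, π / 4 * (t + s)⟩

lemma f_eq_exp_mul_g (a b : ℝ) {t : ℝ} (ht : 0 < t) :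
    f a b t =
      Complex.exp (Complex.I * ↑(π / 2 * log t)) * g (a - b * π ^ 2 / 16) (a + b) t := by
  have ht' : (t : ℂ) ≠ 0 := Complex.ofReal_ne_zero.2 ht.ne'
  set E := Complex.exp (Complex.I * ↑(π / 2 * log t))
  have h₀ : (t : ℂ) ^ (Complex.I * π / 2) = E := by
    rw [Complex.cpow_def_of_ne_zero ht', ← Complex.ofReal_log ht.le]
    congr 1
    push_cast
    ring
  have h₁ : (t : ℂ) ^ (1 + Complex.I * π / 2) = t * E := by
    rw [Complex.cpow_add _ _ ht', h₀, Complex.cpow_one]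
  have h₂ : (t : ℂ) ^ (2 + Complex.I * π / 2) = t ^ 2 * E := by
    rw [Complex.cpow_add _ _ ht', h₀, ← Complex.cpow_natCast]
    norm_num
  rw [f, g, Complex.mk_eq_add_mul_I, h₂, h₁, h₀]
  push_cast
  linear_combination (E * (b * π ^ 2 / 16)) * Complex.I_sq

variable {c s t : ℝ}

lemma sq_le_re_g (ht : |c| + 1 ≤ t) : t ^ 2 ≤ (g c s t).re := by
  have := neg_abs_le c
  simp only [g]
  linarith

lemma continuous_g : Continuous (g c s) := by
  change Continuous fun t => g c s t
  simp only [g, Complex.mk_eq_add_mul_I]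
  fun_prop

lemma continuousAt_arg_g (ht : 0 < (g c s t).re) :
    ContinuousAt (fun t => Complex.arg (g c s t)) t :=
  (Complex.continuousAt_arg (Or.inl ht)).comp continuous_g.continuousAt

lemma abs_im_div_re_g_sub_le (ht : |c| + 1 ≤ t) :
    |(g c s t).im / (g c s t).re - (π / (4 * t) + π * (s - 1) / (4 * t ^ 2))| ≤
      π * (|c + s - 1| + |(s - 1) * c|) / (4 * t ^ 3) := by
  have ht1 : 1 ≤ t := by linarith [abs_nonneg c]
  have hre := sq_le_re_g (s := s) ht
  simp only [g] at hre ⊢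
  have hu : 0 < t ^ 2 + t + c := lt_of_lt_of_le (by positivity) hre
  have hdiff : π / 4 * (t + s) / (t ^ 2 + t + c) - (π / (4 * t) + π * (s - 1) / (4 * t ^ 2)) =
      -(π / 4) * ((c + s - 1) * t + (s - 1) * c) / ((t ^ 2 + t + c) * t ^ 2) := by
    rw [div_add_div _ _ (by positivity) (by positivity), div_sub_div _ _ hu.ne' (by positivity),
      div_eq_div_iff (by positivity) (by positivity)]
    ring
  have hnum : |(c + s - 1) * t + (s - 1) * c| ≤ (|c + s - 1| + |(s - 1) * c|) * t := by
    calc _ ≤ |(c + s - 1) * t| + |(s - 1) * c| := abs_add_le _ _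
      _ = |c + s - 1| * t + |(s - 1) * c| := by rw [abs_mul, abs_of_pos (by linarith : 0 < t)]
      _ ≤ _ := by nlinarith [abs_nonneg ((s - 1) * c)]
  rw [hdiff, abs_div, abs_mul, abs_neg, abs_of_pos (by positivity : 0 < π / 4),
    abs_of_pos (by positivity : 0 < (t ^ 2 + t + c) * t ^ 2),
    div_le_div_iff₀ (by positivity) (by positivity)]
  calc π / 4 * |(c + s - 1) * t + (s - 1) * c| * (4 * t ^ 3)
      ≤ π / 4 * ((|c + s - 1| + |(s - 1) * c|) * t) * (4 * t ^ 3) := by gcongr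
    _ = π * (|c + s - 1| + |(s - 1) * c|) * (t ^ 2 * t ^ 2) := by ring
    _ ≤ π * (|c + s - 1| + |(s - 1) * c|) * ((t ^ 2 + t + c) * t ^ 2) := by gcongr

lemma abs_arg_g_sub_le (ht : |c| + 1 ≤ t) (hs : |s| ≤ t) :
    |Complex.arg (g c s t) - (π / (4 * t) + π * (s - 1) / (4 * t ^ 2))| ≤
      (π ^ 3 + π * (|c + s - 1| + |(s - 1) * c|) / 4) / t ^ 3 := by
  have ht0 : 0 < t := by linarith [abs_nonneg c]
  have hre := sq_le_re_g (s := s) ht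
  have hre0 : 0 < (g c s t).re := lt_of_lt_of_le (by positivity) hre
  rw [Complex.arg_eq_arctan_of_re_pos hre0]
  set x := (g c s t).im / (g c s t).re
  have hx0 : 0 ≤ x := div_nonneg (by simp only [g]; nlinarith [neg_abs_le s, pi_pos]) hre0.le
  have hx : x ≤ π / t := by
    calc x ≤ π * t / t ^ 2 := div_le_div₀ (by positivity)
            (by simp only [g]; nlinarith [le_abs_self s, pi_pos]) (by positivity) hre
      _ = π / t := by field_simp
  have harctan : |arctan x - x| ≤ π ^ 3 / t ^ 3 :=
    calc _ ≤ x ^ 3 := abs_arctan_sub_self_le hx0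
      _ ≤ (π / t) ^ 3 := by gcongr
      _ = π ^ 3 / t ^ 3 := div_pow _ _ _
  calc _ = |(arctan x - x) + (x - (π / (4 * t) + π * (s - 1) / (4 * t ^ 2)))| := by ring_nf
    _ ≤ _ := abs_add_le _ _
    _ ≤ π ^ 3 / t ^ 3 + π * (|c + s - 1| + |(s - 1) * c|) / (4 * t ^ 3) :=
        add_le_add harctan (abs_im_div_re_g_sub_le ht)
    _ = _ := by ring

/-- There is a continuous argument function `θ` of `f` on some `[t₀, ∞)` with
`θ(t) = (π/2)·log t + π/(4t) + π(a + b − 1)/(4t²) + O(1/t³)` as `t → ∞`. -/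
theorem arg_f_asymptotics (a b : ℝ) :
    ∃ t₀ > (0 : ℝ), ∃ θ : ℝ → ℝ, ContinuousOn θ (Set.Ici t₀) ∧
      (∀ t : ℝ, t ≥ t₀ → f a b t = (‖f a b t‖ : ℂ) * Complex.exp (Complex.I * (θ t : ℂ))) ∧
      ∃ A > (0 : ℝ), ∃ t₁ : ℝ, ∀ t : ℝ, t ≥ t₁ →
        |θ t - ((π/2) * Real.log t + π/(4*t) + π*(a + b - 1)/(4*t^2))| ≤ A / t^3 := by
  set c := a - b * π ^ 2 / 16
  set s := a + b
  set t₀ := max (|c| + 1) |s|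
  have ht₀ : 0 < t₀ := lt_max_of_lt_left (by positivity)
  have hc : ∀ t ≥ t₀, |c| + 1 ≤ t := fun t ht => (le_max_left _ _).trans ht
  have hs : ∀ t ≥ t₀, |s| ≤ t := fun t ht => (le_max_right _ _).trans ht
  refine ⟨t₀, ht₀, fun t => π / 2 * log t + Complex.arg (g c s t), ?_, fun t ht => ?_,
    π ^ 3 + π * (|c + s - 1| + |(s - 1) * c|) / 4, by positivity, t₀, fun t ht => ?_⟩
  · intro t ht
    have ht0 : 0 < t := ht₀.trans_le ht
    refine ContinuousAt.continuousWithinAt ?_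
    exact (continuousAt_const.mul (continuousAt_log ht0.ne')).add
      (continuousAt_arg_g ((sq_pos_of_pos ht0).trans_le (sq_le_re_g (hc t ht))))
  · exact Complex.eq_norm_mul_exp_of_eq_exp_mul (f_eq_exp_mul_g a b (ht₀.trans_le ht))
  · calc _ = |Complex.arg (g c s t) - (π / (4 * t) + π * (s - 1) / (4 * t ^ 2))| := by ring_nf
      _ ≤ _ := abs_arg_g_sub_le (hc t ht) (hs t ht)
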